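/- Let τ : C → T and τ̃ : C → T̃ be weak stability functions with τ̃ dominating τ, and let κ : {1,…,n} → C with S({1,…,n},≤,κ,τ,τ̃) ≠ 0. Then τ̃(κ(i)) = τ̃(κ(j)) for all i, j ∈ {1,…,n}; that is, τ̃∘κ is constant. -/

import Mathlib

/-!
Write `f i`, `ℓ i`, `h i` and `t` for the `τ̃`-values of `κ i`, of `κ 0 + ⋯ + κ i`, of
`κ (i+1) + ⋯ + κ (n-1)` and of the total sum. By the seesaw inequality `t` lies between `ℓ i`
and `h i`, and `S ≠ 0` together with domination forces `h i < ℓ i` at every strict ascent of `f`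
and `ℓ i ≤ h i` at every strict descent.

If `f q > t`, an induction from the left shows that, whenever `f i > t`, either `ℓ i > t` or
`h i < t`: the second alternative survives a step to the right because `h i` lies between
`f (i+1) > t` and `h (i+1)`. This is incompatible with a descent at `i`, so `f` stays above `t`
up to `i = n - 1`, where `ℓ (n-1) = t`. The case `f q < t` is symmetric, with `ℓ i < t` or
`ℓ i ≤ t ≤ h i` as the invariant. Hence `f ≡ t`.
-/

open scoped Classical
open Finset Function

/-- A weak stability function on `C ⊆ A` with values in a total order:
whenever `α, γ ∈ C` (so that `β = α + γ`), either `τ α ≤ τ β ≤ τ γ` or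
`τ α ≥ τ β ≥ τ γ`. -/
def WeakStability {A T : Type*} [AddCommGroup A] [LinearOrder T] (C : Set A) (τ : A → T) : Prop :=
  ∀ α γ : A, α ∈ C → γ ∈ C →
    (τ α ≤ τ (α + γ) ∧ τ (α + γ) ≤ τ γ) ∨ (τ γ ≤ τ (α + γ) ∧ τ (α + γ) ≤ τ α)

/-- Sum `κ 0 + ⋯ + κ i`. -/
def lowSum {A : Type*} [AddCommGroup A] (κ : ℕ → A) (i : ℕ) : A :=
  ∑ j ∈ Finset.range (i + 1), κ j

/-- Sum `κ (i+1) + ⋯ + κ (n-1)`. -/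
def highSum {A : Type*} [AddCommGroup A] (κ : ℕ → A) (i n : ℕ) : A :=
  ∑ j ∈ Finset.Ico (i + 1) n, κ j

/-- Condition (a) at position `i` in the definition of the coefficient `S`. -/
def SCondA {A T T' : Type*} [AddCommGroup A] [LinearOrder T] [LinearOrder T']
    (τ : A → T) (τ' : A → T') (n : ℕ) (κ : ℕ → A) (i : ℕ) : Prop :=
  τ (κ i) ≤ τ (κ (i + 1)) ∧ τ' (highSum κ i n) < τ' (lowSum κ i)

/-- Condition (b) at position `i` in the definition of the coefficient `S`. -/
def SCondB {A T T' : Type*} [AddCommGroup A] [LinearOrder T] [LinearOrder T']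
    (τ : A → T) (τ' : A → T') (n : ℕ) (κ : ℕ → A) (i : ℕ) : Prop :=
  τ (κ (i + 1)) < τ (κ i) ∧ τ' (lowSum κ i) ≤ τ' (highSum κ i n)

/-- The transformation coefficient `S({1,…,n},≤,κ,τ,τ')` for the sequence
`κ 0, …, κ (n-1)` (indexed from `0`). -/
noncomputable def Scoeff {A T T' : Type*} [AddCommGroup A] [LinearOrder T] [LinearOrder T']
    (τ : A → T) (τ' : A → T') (n : ℕ) (κ : ℕ → A) : ℤ :=
  if ∀ i ∈ Finset.range (n - 1), SCondA τ τ' n κ i ∨ SCondB τ τ' n κ i then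
    (-1) ^ ((Finset.range (n - 1)).filter (SCondA τ τ' n κ)).card
  else 0

/-- The sequence `κ 0, …, κ (n-1)` is `τ`-reversing. -/
def Reversing {A T : Type*} [AddCommGroup A] [LinearOrder T] (τ : A → T) (n : ℕ) (κ : ℕ → A) :
    Prop :=
  ∀ i, i + 1 < n → τ (κ (i + 1)) < τ (κ i)

/-- The sequence `κ 0, …, κ (n-1)` is `τ`-semistable. -/
def Semistable {A T : Type*} [AddCommGroup A] [LinearOrder T] (τ : A → T) (n : ℕ) (κ : ℕ → A) :
    Prop :=
  ∀ i, i + 1 < n → τ (lowSum κ i) ≤ τ (highSum κ i n)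

/-- Extend a `Fin n`-indexed sequence to `ℕ` by zero. -/
def toSeq {A : Type*} [AddCommGroup A] {n : ℕ} (κ : Fin n → A) : ℕ → A :=
  fun j => if h : j < n then κ ⟨j, h⟩ else 0

/-- The subsequence of `κ` on a subset `s ⊆ Fin n`, enumerated in increasing order. -/
noncomputable def fiberSeq {A : Type*} [AddCommGroup A] {n : ℕ} (κ : Fin n → A)
    (s : Finset (Fin n)) : ℕ → A :=
  fun j => if h : j < s.card then κ (s.orderIsoOfFin rfl ⟨j, h⟩).1 else 0

/-- The transformation coefficient `U({1,…,n},≤,κ,τ,τ')`. -/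
noncomputable def Ucoeff {A T T' : Type*} [AddCommGroup A] [LinearOrder T] [LinearOrder T']
    (τ : A → T) (τ' : A → T') (n : ℕ) (κ : ℕ → A) : ℚ :=
  ∑ l ∈ Finset.Icc 1 n, ∑ m ∈ Finset.Icc l n,
    ∑ p ∈ Finset.univ.filter
        (fun p : (Fin n → Fin m) × (Fin m → Fin l) =>
          Surjective p.1 ∧ Monotone p.1 ∧ Surjective p.2 ∧ Monotone p.2),
      (if (∀ i : Fin n, τ (κ i.1) =
              τ (∑ j ∈ Finset.univ.filter (fun j : Fin n => p.1 j = p.1 i), κ j.1)) ∧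
          (∀ a : Fin l,
              τ' (∑ j ∈ Finset.univ.filter (fun j : Fin n => p.2 (p.1 j) = a), κ j.1) =
              τ' (∑ j ∈ Finset.range n, κ j)) then
        (∏ a : Fin l,
          ((Scoeff τ τ' (Finset.univ.filter (fun b : Fin m => p.2 b = a)).card
            (fiberSeq
              (fun b : Fin m => ∑ j ∈ Finset.univ.filter (fun j : Fin n => p.1 j = b), κ j.1)
              (Finset.univ.filter (fun b : Fin m => p.2 b = a)))) : ℚ))
        * ((-1 : ℚ) ^ (l - 1) / (l : ℚ))
        * ∏ b : Fin m,
            ((1 : ℚ) / (Nat.factorial (Finset.univ.filter (fun j : Fin n => p.1 j = b)).card : ℚ))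
      else 0)

section AddClosed

variable {A : Type*} [AddCommGroup A] {C : Set A}

theorem sum_Ico_mem (hC : ∀ a b : A, a ∈ C → b ∈ C → a + b ∈ C) {κ : ℕ → A} {a b : ℕ}
    (hκ : ∀ j, a ≤ j → j < b → κ j ∈ C) (hab : a < b) : ∑ j ∈ Ico a b, κ j ∈ C := by
  induction b, hab using Nat.le_induction with
  | base => simpa using hκ a le_rfl (Nat.lt_succ_self a)
  | succ b hab ih =>
    rw [sum_Ico_succ_top (by omega)]
    exact hC _ _ (ih fun j h1 h2 => hκ j h1 (by omega)) (hκ b (by omega) (by omega))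

theorem WeakStability.mem_uIcc {T : Type*} [LinearOrder T] {τ : A → T}
    (hτ : WeakStability C τ) {α γ : A} (hα : α ∈ C) (hγ : γ ∈ C) :
    τ (α + γ) ∈ Set.uIcc (τ α) (τ γ) :=
  Set.mem_uIcc.mpr (hτ α γ hα hγ)

end AddClosed

section PartialSums

variable {A : Type*} [AddCommGroup A] (κ : ℕ → A)

theorem lowSum_zero : lowSum κ 0 = κ 0 := by
  simp [lowSum]

theorem lowSum_succ (i : ℕ) : lowSum κ (i + 1) = lowSum κ i + κ (i + 1) :=
  sum_range_succ κ (i + 1)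

theorem highSum_eq_add {i n : ℕ} (hi : i + 1 < n) :
    highSum κ i n = κ (i + 1) + highSum κ (i + 1) n :=
  sum_eq_sum_Ico_succ_bot hi κ

theorem highSum_of_add_two_eq {i n : ℕ} (hi : i + 2 = n) : highSum κ i n = κ (i + 1) := by
  rw [highSum_eq_add κ (by omega), highSum, ← hi, Ico_self, sum_empty, add_zero]

theorem lowSum_add_highSum {i n : ℕ} (hi : i < n) :
    lowSum κ i + highSum κ i n = ∑ j ∈ range n, κ j :=
  sum_range_add_sum_Ico κ (by omega)

theorem lowSum_of_add_one_eq {i n : ℕ} (hi : i + 1 = n) : lowSum κ i = ∑ j ∈ range n, κ j := by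
  rw [lowSum, hi]

end PartialSums

/-- The `τ̃`-profile of the partial sums of `κ 0, …, κ (n-1)`: `f i = τ̃ (κ i)`,
`ℓ i = τ̃ (lowSum κ i)`, `h i = τ̃ (highSum κ i n)` and `t = τ̃ (κ 0 + ⋯ + κ (n-1))`. -/
structure SeesawProfile {T : Type*} [LinearOrder T] (n : ℕ) (f ℓ h : ℕ → T) (t : T) : Prop where
  low_zero : ℓ 0 = f 0
  low_succ : ∀ i, i + 1 < n → ℓ (i + 1) ∈ Set.uIcc (ℓ i) (f (i + 1))
  low_last : ∀ i, i + 1 = n → ℓ i = t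
  high_last : ∀ i, i + 2 = n → h i = f (i + 1)
  high_pred : ∀ i, i + 2 < n → h i ∈ Set.uIcc (f (i + 1)) (h (i + 1))
  total_mem : ∀ i, i + 1 < n → t ∈ Set.uIcc (ℓ i) (h i)
  high_lt_low : ∀ i, i + 1 < n → f i < f (i + 1) → h i < ℓ i
  low_le_high : ∀ i, i + 1 < n → f (i + 1) < f i → ℓ i ≤ h i

namespace SeesawProfile

variable {T : Type*} [LinearOrder T] {n : ℕ} {f ℓ h : ℕ → T} {t : T}

theorem high_succ_notMem (P : SeesawProfile n f ℓ h t) {s : Set T} (hs : s.OrdConnected)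
    {i : ℕ} (hi : i + 1 < n) (hh : h i ∉ s) (hf : f (i + 1) ∈ s) :
    i + 2 < n ∧ h (i + 1) ∉ s := by
  have hi2 : i + 2 < n := by
    by_contra hn
    exact hh (P.high_last i (by omega) ▸ hf)
  exact ⟨hi2, fun hs' => hh (hs.uIcc_subset hf hs' (P.high_pred i hi2))⟩

theorem lt_low_or_high_lt (P : SeesawProfile n f ℓ h t) :
    ∀ i < n, t < f i → t < ℓ i ∨ (i + 1 < n ∧ h i < t) := by
  intro i
  induction i with
  | zero => exact fun _ hf => .inl (P.low_zero ▸ hf)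
  | succ i ih =>
    intro hi hf
    have hprev : t < ℓ i ∨ h i < t := by
      rcases lt_or_ge t (f i) with hfi | hfi
      · exact (ih (by omega) hfi).imp_right And.right
      · have hlt := P.high_lt_low i hi (hfi.trans_lt hf)
        exact (lt_or_ge t (ℓ i)).imp_right hlt.trans_le
    rcases hprev with hℓ | hh
    · exact .inl (Set.ordConnected_Ioi.uIcc_subset hℓ hf (P.low_succ i hi))
    · obtain ⟨hi2, hh'⟩ := P.high_succ_notMem Set.ordConnected_Ici hi hh.not_ge hf.le
      exact .inr ⟨hi2, lt_of_not_ge hh'⟩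

theorem low_lt_or_mem_Icc (P : SeesawProfile n f ℓ h t) :
    ∀ i < n, f i < t → ℓ i < t ∨ (i + 1 < n ∧ t ∈ Set.Icc (ℓ i) (h i)) := by
  intro i
  induction i with
  | zero => exact fun _ hf => .inl (P.low_zero ▸ hf)
  | succ i ih =>
    intro hi hf
    have hprev : ℓ i < t ∨ t ∈ Set.Icc (ℓ i) (h i) := by
      rcases lt_or_ge (f i) t with hfi | hfi
      · exact (ih (by omega) hfi).imp_right And.right
      · have hle := P.low_le_high i hi (hf.trans_le hfi)
        exact .inr (Set.uIcc_of_le hle ▸ P.total_mem i hi)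
    rcases hprev with hℓ | ⟨hℓ, hh⟩
    · exact .inl (Set.ordConnected_Iio.uIcc_subset hℓ hf (P.low_succ i hi))
    · obtain ⟨hi2, hh'⟩ := P.high_succ_notMem Set.ordConnected_Iio hi hh.not_gt hf
      exact .inr ⟨hi2, Set.ordConnected_Iic.uIcc_subset hℓ hf.le (P.low_succ i hi),
        le_of_not_gt hh'⟩

theorem not_lt_apply (P : SeesawProfile n f ℓ h t) {q : ℕ} (hq : q < n) : ¬ t < f q := by
  intro hfq
  have hup : ∀ j, q ≤ j → j < n → t < f j := by
    intro j hqj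
    induction j, hqj using Nat.le_induction with
    | base => exact fun _ => hfq
    | succ j _ ih =>
      intro hj
      have hfj := ih (by omega)
      refine lt_of_not_ge fun hle => ?_
      have hIcc := Set.uIcc_of_le (P.low_le_high j hj (hle.trans_lt hfj)) ▸ P.total_mem j hj
      rcases P.lt_low_or_high_lt j (by omega) hfj with hℓ | ⟨_, hh⟩
      · exact hℓ.not_ge hIcc.1
      · exact hh.not_ge hIcc.2
  rcases P.lt_low_or_high_lt (n - 1) (by omega) (hup (n - 1) (by omega) (by omega)) with
    hℓ | ⟨hn, _⟩
  · exact hℓ.ne' (P.low_last (n - 1) (by omega))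
  · omega

theorem not_apply_lt (P : SeesawProfile n f ℓ h t) {q : ℕ} (hq : q < n) : ¬ f q < t := by
  intro hfq
  have hdown : ∀ j, q ≤ j → j < n → f j < t := by
    intro j hqj
    induction j, hqj using Nat.le_induction with
    | base => exact fun _ => hfq
    | succ j _ ih =>
      intro hj
      have hfj := ih (by omega)
      refine lt_of_not_ge fun hle => ?_
      have hlt := P.high_lt_low j hj (hfj.trans_le hle)
      have hIcc := Set.uIcc_of_ge hlt.le ▸ P.total_mem j hj
      rcases P.low_lt_or_mem_Icc j (by omega) hfj with hℓ | ⟨_, hℓ, hh⟩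
      · exact hℓ.not_ge hIcc.2
      · exact hlt.not_ge (hℓ.trans hh)
  rcases P.low_lt_or_mem_Icc (n - 1) (by omega) (hdown (n - 1) (by omega) (by omega)) with
    hℓ | ⟨hn, _⟩
  · exact hℓ.ne (P.low_last (n - 1) (by omega))
  · omega

theorem apply_eq (P : SeesawProfile n f ℓ h t) {i : ℕ} (hi : i < n) : f i = t :=
  le_antisymm (not_lt.mp (P.not_lt_apply hi)) (not_lt.mp (P.not_apply_lt hi))

end SeesawProfile

section Coefficient

variable {A T T' : Type*} [AddCommGroup A] [LinearOrder T] [LinearOrder T']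

theorem sCondA_or_sCondB_of_scoeff_ne_zero {τ : A → T} {τ' : A → T'} {n : ℕ} {κ : ℕ → A}
    (hS : Scoeff τ τ' n κ ≠ 0) {i : ℕ} (hi : i + 1 < n) :
    SCondA τ τ' n κ i ∨ SCondB τ τ' n κ i := by
  by_contra hne
  refine hS (if_neg fun hall => hne (hall i ?_))
  exact mem_range.mpr (by omega)

theorem seesawProfile_of_scoeff_ne_zero {C : Set A}
    (hC : ∀ a b : A, a ∈ C → b ∈ C → a + b ∈ C) {τ : A → T} {τt : A → T'}
    (hτt : WeakStability C τt) (hdom : ∀ α β : A, α ∈ C → β ∈ C → τ α ≤ τ β → τt α ≤ τt β)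
    {n : ℕ} {κ : ℕ → A} (hκ : ∀ i, i < n → κ i ∈ C) (hS : Scoeff τ τt n κ ≠ 0) :
    SeesawProfile n (fun i => τt (κ i)) (fun i => τt (lowSum κ i))
      (fun i => τt (highSum κ i n)) (τt (∑ j ∈ range n, κ j)) := by
  have low_mem : ∀ i, i < n → lowSum κ i ∈ C := fun i hi => by
    rw [lowSum, range_eq_Ico]
    exact sum_Ico_mem hC (fun j _ hj => hκ j (by omega)) (Nat.succ_pos i)
  have high_mem : ∀ i, i + 1 < n → highSum κ i n ∈ C := fun i hi =>
    sum_Ico_mem hC (fun j _ hj => hκ j hj) hi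
  exact {
    low_zero := congrArg τt (lowSum_zero κ)
    low_succ := fun i hi => by
      rw [lowSum_succ]
      exact hτt.mem_uIcc (low_mem i (by omega)) (hκ (i + 1) hi)
    low_last := fun i hi => congrArg τt (lowSum_of_add_one_eq κ hi)
    high_last := fun i hi => congrArg τt (highSum_of_add_two_eq κ hi)
    high_pred := fun i hi => by
      rw [highSum_eq_add κ (show i + 1 < n by omega)]
      exact hτt.mem_uIcc (hκ (i + 1) (by omega)) (high_mem (i + 1) hi)
    total_mem := fun i hi => by
      rw [← lowSum_add_highSum κ (show i < n by omega)]
      exact hτt.mem_uIcc (low_mem i (by omega)) (high_mem i hi)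
    high_lt_low := fun i hi hlt => (sCondA_or_sCondB_of_scoeff_ne_zero hS hi).elim And.right
      fun hB => absurd (hdom _ _ (hκ _ hi) (hκ _ (by omega)) hB.1.le) hlt.not_ge
    low_le_high := fun i hi hlt => (sCondA_or_sCondB_of_scoeff_ne_zero hS hi).elim
      (fun hA => absurd (hdom _ _ (hκ _ (by omega)) (hκ _ hi) hA.1) hlt.not_ge) And.right }

end Coefficient

theorem stmt17_general {A T T' : Type*} [AddCommGroup A] [LinearOrder T] [LinearOrder T']
    (C : Set A) (hC : ∀ a b : A, a ∈ C → b ∈ C → a + b ∈ C)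
    (τ : A → T) (τt : A → T') (hτt : WeakStability C τt)
    (hdom : ∀ α β : A, α ∈ C → β ∈ C → τ α ≤ τ β → τt α ≤ τt β)
    (n : ℕ) (κ : ℕ → A) (hκ : ∀ i, i < n → κ i ∈ C)
    (hS : Scoeff τ τt n κ ≠ 0) :
    ∀ i j, i < n → j < n → τt (κ i) = τt (κ j) := by
  have P := seesawProfile_of_scoeff_ne_zero hC hτt hdom hκ hS
  intro i j hi hj
  exact (P.apply_eq hi).trans (P.apply_eq hj).symm

theorem stmt17 {A T T' : Type*} [AddCommGroup A] [LinearOrder T] [LinearOrder T']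
    (C : Set A) (hC : ∀ a b : A, a ∈ C → b ∈ C → a + b ∈ C) (h0 : (0 : A) ∉ C)
    (τ : A → T) (τt : A → T') (hτ : WeakStability C τ) (hτt : WeakStability C τt)
    (hdom : ∀ α β : A, α ∈ C → β ∈ C → τ α ≤ τ β → τt α ≤ τt β)
    (n : ℕ) (κ : ℕ → A) (hκ : ∀ i, i < n → κ i ∈ C)
    (hS : Scoeff τ τt n κ ≠ 0) :
    ∀ i j, i < n → j < n → τt (κ i) = τt (κ j) :=
  stmt17_general C hC τ τt hτt hdom n κ hκ hS
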